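/- For integers 0 ≤ k ≤ n, let T(n,k) = 2·C(n,k)²·C(2n+2,n)/C(2n+2,2k+1) ∈ ℚ. Work in R = ℚ[x,y][[t]], and let S₁, S₂ ∈ R have constant term 1 and satisfy S₁² = 1 + 4t·x² and S₂² = 1 + 4t·y². Then S₁·S₂ = 1 + 2·(x²+y²)·t - 2·(x²-y²)² · ∑_{n≥0} (-1)ⁿ·t^{n+2} · ∑_{k=0}^{n} T(n,k)·x^{2k}·y^{2n-2k}. -/

import Mathlib

noncomputable section

open MvPolynomial

/-- The triangle A120406: `T(n,k) = 2·C(n,k)²·C(2n+2,n)/C(2n+2,2k+1)`. -/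
def Tnk (n k : ℕ) : ℚ :=
  2 * (n.choose k : ℚ) ^ 2 * ((2 * n + 2).choose n : ℚ) / ((2 * n + 2).choose (2 * k + 1) : ℚ)

/-- `ℚ[x,y]`, polynomials in two variables over `ℚ`. -/
abbrev Rxy : Type := MvPolynomial (Fin 2) ℚ

def px : Rxy := X 0
def py : Rxy := X 1

open Finset

lemma qcat_succ (n : ℕ) : ((n:ℚ)+2) * (catalan (n+1) : ℚ) = 2*(2*n+1) * (catalan n : ℚ) := by
  have h1 := succ_mul_catalan_eq_centralBinom n
  have h2 := succ_mul_catalan_eq_centralBinom (n+1)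
  have h3 := Nat.succ_mul_centralBinom_succ n
  have key : (n+1) * ((n+2) * catalan (n+1)) = (n+1) * (2*(2*n+1) * catalan n) := by
    calc (n+1) * ((n+2) * catalan (n+1)) = (n+1) * ((n+1+1) * catalan (n+1)) := by ring_nf
    _ = (n+1) * Nat.centralBinom (n+1) := by rw [h2]
    _ = 2*(2*n+1) * Nat.centralBinom n := h3
    _ = 2*(2*n+1) * ((n+1) * catalan n) := by rw [h1]
    _ = (n+1) * (2*(2*n+1) * catalan n) := by ring
  have h4 := Nat.eq_of_mul_eq_mul_left (Nat.succ_pos n) key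
  exact_mod_cast h4

lemma qcb (k : ℕ) : ((2*k).choose k : ℚ) = ((k:ℚ)+1) * (catalan k : ℚ) := by
  rw [show (2*k).choose k = Nat.centralBinom k from rfl, ← succ_mul_catalan_eq_centralBinom]
  push_cast; ring

lemma Tnk_cat {n k : ℕ} (h : k ≤ n) :
    Tnk n k = 2 * (2*(k:ℚ)+1) * ((k:ℚ)+1) * (catalan k : ℚ) * (2*((n:ℚ)-(k:ℚ))+1) * (((n:ℚ)-(k:ℚ))+1) * (catalan (n-k) : ℚ)
      / (((n:ℚ)+1)*((n:ℚ)+2)) := by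
  obtain ⟨d, rfl⟩ : ∃ d, n = k + d := ⟨n - k, by omega⟩
  have hd : (k + d) - k = d := by omega
  rw [hd]
  have e1 : ((k+d).choose k : ℚ) = (k+d).factorial / (k.factorial * d.factorial) := by
    rw [Nat.cast_choose ℚ (by omega), hd]
  have e2 : ((2*(k+d)+2).choose (k+d) : ℚ)
      = (2*(k+d)+2).factorial / ((k+d).factorial * ((k+d)+2).factorial) := by
    rw [Nat.cast_choose ℚ (by omega), show 2*(k+d)+2 - (k+d) = (k+d)+2 from by omega]
  have e3 : ((2*(k+d)+2).choose (2*k+1) : ℚ)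
      = (2*(k+d)+2).factorial / ((2*k+1).factorial * (2*d+1).factorial) := by
    rw [Nat.cast_choose ℚ (by omega), show 2*(k+d)+2 - (2*k+1) = 2*d+1 from by omega]
  have ck := qcb k
  have cd := qcb d
  have f1 : ((2*k+1).factorial : ℚ) = (2*(k:ℚ)+1) * (2*k).factorial := by
    rw [Nat.factorial_succ]; push_cast; ring
  have f2 : ((2*d+1).factorial : ℚ) = (2*(d:ℚ)+1) * (2*d).factorial := by
    rw [Nat.factorial_succ]; push_cast; ring
  have f3 : (((k+d)+2).factorial : ℚ) = ((k:ℚ)+(d:ℚ)+2) * ((k:ℚ)+(d:ℚ)+1) * (k+d).factorial := by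
    rw [Nat.factorial_succ, Nat.factorial_succ]; push_cast; ring
  have g1 : ((2*k).factorial : ℚ) = ((2*k).choose k : ℚ) * (k.factorial * k.factorial) := by
    rw [Nat.cast_choose ℚ (by omega), show 2*k - k = k from by omega]
    field_simp
  have g2 : ((2*d).factorial : ℚ) = ((2*d).choose d : ℚ) * (d.factorial * d.factorial) := by
    rw [Nat.cast_choose ℚ (by omega), show 2*d - d = d from by omega]
    field_simp
  have nz1 : (k.factorial : ℚ) ≠ 0 := by exact_mod_cast k.factorial_ne_zero
  have nz2 : (d.factorial : ℚ) ≠ 0 := by exact_mod_cast d.factorial_ne_zero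
  have nz3 : ((k+d).factorial : ℚ) ≠ 0 := by exact_mod_cast (k+d).factorial_ne_zero
  have nz4 : ((2*(k+d)+2).factorial : ℚ) ≠ 0 := by exact_mod_cast (2*(k+d)+2).factorial_ne_zero
  have nzn1 : ((k:ℚ)+(d:ℚ)+1) ≠ 0 := by positivity
  have nzn2 : ((k:ℚ)+(d:ℚ)+2) ≠ 0 := by positivity
  have ck' : (catalan k : ℚ) = ((2*k).choose k : ℚ) / ((k:ℚ)+1) := by
    rw [ck]; field_simp
  have cd' : (catalan d : ℚ) = ((2*d).choose d : ℚ) / ((d:ℚ)+1) := by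
    rw [cd]; field_simp
  rw [Tnk, e1, e2, e3, ck', cd', f1, f2, f3, g1, g2]
  push_cast
  field_simp
  ring

lemma qcat_succ' (n : ℕ) :
    (catalan (n+1) : ℚ) = 2*(2*(n:ℚ)+1) * (catalan n : ℚ) / ((n:ℚ)+2) := by
  have h := qcat_succ n
  have h2 : ((n:ℚ)+2) ≠ 0 := by positivity
  field_simp
  linear_combination h

lemma I1 (n : ℕ) : Tnk n 0 = (catalan (n+1) : ℚ) := by
  rw [Tnk_cat (Nat.zero_le n), qcat_succ' n]
  simp [catalan_zero]
  have h2 : ((n:ℚ)+2) ≠ 0 := by positivity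
  have h1 : ((n:ℚ)+1) ≠ 0 := by positivity
  field_simp

lemma I1' (n : ℕ) : Tnk n n = (catalan (n+1) : ℚ) := by
  rw [Tnk_cat (le_refl n), qcat_succ' n]
  simp [catalan_zero]
  have h2 : ((n:ℚ)+2) ≠ 0 := by positivity
  have h1 : ((n:ℚ)+1) ≠ 0 := by positivity
  field_simp

lemma I2 (e : ℕ) : Tnk (e+1) 1 = 2*(catalan (e+2) : ℚ) - 2*(catalan (e+1) : ℚ) := by
  have hA := qcat_succ' e
  have hB := qcat_succ' (e+1)
  push_cast at hB
  rw [show e+1+1 = e+2 from rfl] at hB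
  rw [Tnk_cat (show 1 ≤ e+1 by omega), hB, hA]
  push_cast
  have h2 : ((e:ℚ)+2) ≠ 0 := by positivity
  have h3 : ((e:ℚ)+3) ≠ 0 := by positivity
  simp [catalan_one]
  field_simp
  ring

lemma I2' (e : ℕ) : Tnk (e+1) e = 2*(catalan (e+2) : ℚ) - 2*(catalan (e+1) : ℚ) := by
  have hA := qcat_succ' e
  have hB := qcat_succ' (e+1)
  push_cast at hB
  rw [show e+1+1 = e+2 from rfl] at hB
  rw [Tnk_cat (show e ≤ e+1 by omega), hB, hA]
  push_cast
  rw [show (e:ℕ)+1-e = 1 from by omega]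
  have h2 : ((e:ℚ)+2) ≠ 0 := by positivity
  have h3 : ((e:ℚ)+3) ≠ 0 := by positivity
  simp [catalan_one]
  field_simp
  ring

lemma I3 (i e : ℕ) :
    Tnk (i+e+2) i - 2 * Tnk (i+e+2) (i+1) + Tnk (i+e+2) (i+2)
      = -2 * (catalan (i+1) : ℚ) * (catalan (e+1) : ℚ) := by
  have hI1 := qcat_succ' i
  have hI2 := qcat_succ' (i+1)
  have hE1 := qcat_succ' e
  have hE2 := qcat_succ' (e+1)
  push_cast at hI2 hE2
  rw [show i+1+1 = i+2 from rfl] at hI2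
  rw [show e+1+1 = e+2 from rfl] at hE2
  rw [Tnk_cat (show i ≤ i+e+2 by omega), Tnk_cat (show i+1 ≤ i+e+2 by omega),
    Tnk_cat (show i+2 ≤ i+e+2 by omega),
    show (i+e+2)-i = e+2 from by omega, show (i+e+2)-(i+1) = e+1 from by omega,
    show (i+e+2)-(i+2) = e from by omega, hI2, hE2, hI1, hE1]
  push_cast
  have h1 : ((i:ℚ)+2) ≠ 0 := by positivity
  have h2 : ((i:ℚ)+3) ≠ 0 := by positivity
  have h3 : ((e:ℚ)+2) ≠ 0 := by positivity
  have h4 : ((e:ℚ)+3) ≠ 0 := by positivity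
  have h5 : ((i:ℚ)+(e:ℚ)+3) ≠ 0 := by positivity
  have h6 : ((i:ℚ)+(e:ℚ)+4) ≠ 0 := by positivity
  field_simp
  ring

def cseq : ℕ → ℚ
  | 0 => 1
  | (j+1) => 2 * (-1:ℚ)^j * catalan j

lemma cseq_zero : cseq 0 = 1 := rfl
lemma cseq_succ (j : ℕ) : cseq (j+1) = 2 * (-1:ℚ)^j * catalan j := rfl

lemma cseq_one : cseq 1 = 2 := by
  rw [show (1:ℕ) = 0+1 from rfl, cseq_succ]
  norm_num [catalan_zero]

lemma catalan_sum (s : ℕ) :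
    ∑ j ∈ range (s+1), (catalan j : ℚ) * (catalan (s-j) : ℚ) = (catalan (s+1) : ℚ) := by
  have h : catalan (s+1) = ∑ j ∈ range (s+1), catalan j * catalan (s-j) := by
    rw [catalan_succ', Finset.Nat.sum_antidiagonal_eq_sum_range_succ_mk]
  rw [h]
  push_cast
  rfl

lemma conv (s : ℕ) : ∑ j ∈ range (s+3), cseq j * cseq (s+2-j) = 0 := by
  rw [show s+3 = (s+2)+1 from rfl, Finset.sum_range_succ', Finset.sum_range_succ]
  have hmid : ∀ x ∈ range (s+1), cseq (x+1) * cseq (s+2-(x+1))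
      = 4*(-1:ℚ)^s * ((catalan x : ℚ) * (catalan (s-x) : ℚ)) := by
    intro x hx
    simp only [Finset.mem_range] at hx
    rw [show s+2-(x+1) = (s-x)+1 from by omega, cseq_succ, cseq_succ]
    have hs : (-1:ℚ)^x * (-1:ℚ)^(s-x) = (-1:ℚ)^s := by
      rw [← pow_add]; congr 1; omega
    calc (2*(-1:ℚ)^x*catalan x) * (2*(-1:ℚ)^(s-x)*catalan (s-x))
        = 4 * ((-1:ℚ)^x * (-1:ℚ)^(s-x)) * ((catalan x : ℚ) * (catalan (s-x) : ℚ)) := by ring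
      _ = _ := by rw [hs]
  rw [Finset.sum_congr rfl hmid, ← Finset.mul_sum, catalan_sum s]
  rw [show s+2-(s+1+1) = 0 from by omega, show s+2-0 = (s+1)+1 from rfl]
  rw [cseq_zero, cseq_succ, pow_succ]
  ring

lemma keyj (n j : ℕ) (hj : j ≤ n+2) :
    cseq j * cseq (n+2-j)
      = -2 * (-1:ℚ)^n *
        ((if 2 ≤ j then (if j-2 ≤ n then Tnk n (j-2) else 0) else 0)
          - 2 * (if 1 ≤ j then (if j-1 ≤ n then Tnk n (j-1) else 0) else 0)
          + (if j ≤ n then Tnk n j else 0)) := by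
  match j with
  | 0 =>
    simp only [show ¬(2 ≤ 0) from by omega, show ¬(1 ≤ 0) from by omega, if_false,
      show (0 ≤ n) from Nat.zero_le n, if_true, Nat.sub_zero, if_pos (Nat.zero_le n)]
    rw [show n+2 = (n+1)+1 from rfl, cseq_succ, cseq_zero, I1, pow_succ]
    ring
  | 1 =>
    simp only [show ¬(2 ≤ 1) from by omega, if_false, show (1 ≤ 1) from le_refl 1, if_true,
      show (1:ℕ)-1 = 0 from rfl, if_pos (Nat.zero_le n)]
    rw [show n+2-1 = n+1 from by omega, cseq_one, cseq_succ]
    match n with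
    | 0 =>
      simp only [show ¬(1 ≤ 0) from by omega, if_false]
      rw [I1 0]
      norm_num [catalan_one, catalan_zero]
    | (e+1) =>
      simp only [show 1 ≤ e+1 from by omega, if_true]
      rw [I1 (e+1), I2 e, pow_succ]
      ring
  | (i+2) =>
    have hi : i ≤ n := by omega
    simp only [show 2 ≤ i+2 from by omega, if_true, show 1 ≤ i+2 from by omega,
      show i+2-2 = i from by omega, show i+2-1 = i+1 from by omega, if_pos hi]
    rcases Nat.lt_or_ge (i+1) n with hlt | hge
    · -- i+2 ≤ n
      obtain ⟨e, rfl⟩ : ∃ e, n = i+e+2 := ⟨n-i-2, by omega⟩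
      rw [if_pos (show i+1 ≤ i+e+2 by omega), if_pos (show i+2 ≤ i+e+2 by omega)]
      rw [show i+e+2+2-(i+2) = e+2 from by omega, show (i:ℕ)+2 = (i+1)+1 from rfl,
        show (e:ℕ)+2 = (e+1)+1 from rfl, cseq_succ, cseq_succ, I3 i e]
      have hs : (-1:ℚ)^(i+1) * (-1:ℚ)^(e+1) = (-1:ℚ)^(i+e+2) := by
        rw [← pow_add]; congr 1; omega
      calc (2*(-1:ℚ)^(i+1)*catalan (i+1)) * (2*(-1:ℚ)^(e+1)*catalan (e+1))
          = 4 * ((-1:ℚ)^(i+1) * (-1:ℚ)^(e+1)) * ((catalan (i+1):ℚ) * (catalan (e+1):ℚ)) := by ring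
        _ = _ := by rw [hs]; ring
    · rcases Nat.eq_or_lt_of_le hge with heq | hlt2
      · -- i+1 = n
        obtain rfl : n = i+1 := heq
        rw [if_pos (le_refl (i+1)), if_neg (show ¬(i+2 ≤ i+1) from by omega)]
        rw [show i+1+2-(i+2) = 1 from by omega, show (i:ℕ)+2 = (i+1)+1 from rfl,
          cseq_succ, cseq_one, I2' i, I1' (i+1)]
        rw [pow_succ]
        ring
      · -- i = n
        have hni : i = n := by omega
        subst hni
        rw [if_neg (show ¬(i+1 ≤ i) from by omega), if_neg (show ¬(i+2 ≤ i) from by omega)]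
        rw [show i+2-(i+2) = 0 from by omega, show (i:ℕ)+2 = (i+1)+1 from rfl,
          cseq_succ, cseq_zero, I1' i, pow_succ]
        ring

noncomputable def FF (p : Rxy) : PowerSeries Rxy :=
  PowerSeries.mk fun n => MvPolynomial.C (cseq n) * p ^ (2*n)

lemma FF_const (p : Rxy) : PowerSeries.constantCoeff (FF p) = 1 := by
  have : PowerSeries.constantCoeff (FF p) = PowerSeries.coeff 0 (FF p) := by
    simp [PowerSeries.coeff_zero_eq_constantCoeff]
  rw [this, FF, PowerSeries.coeff_mk]
  simp [cseq]

lemma C4 : (MvPolynomial.C (4:ℚ) : Rxy) = 4 := by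
  have h := map_natCast (MvPolynomial.C : ℚ →+* Rxy) 4
  exact_mod_cast h

lemma FF_sq (p : Rxy) : (FF p) ^ 2 = 1 + PowerSeries.C (4 * p ^ 2) * PowerSeries.X := by
  apply PowerSeries.ext
  intro m
  rw [sq, PowerSeries.coeff_mul, Finset.Nat.sum_antidiagonal_eq_sum_range_succ_mk]
  simp only [FF, PowerSeries.coeff_mk]
  have hterm : ∀ k ∈ range (m+1),
      (MvPolynomial.C (cseq k) * p ^ (2*k)) * (MvPolynomial.C (cseq (m-k)) * p ^ (2*(m-k)))
        = MvPolynomial.C (cseq k * cseq (m-k)) * p ^ (2*m) := by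
    intro k hk
    simp only [Finset.mem_range] at hk
    rw [map_mul]
    rw [show (2*m) = 2*k + 2*(m-k) from by omega, pow_add]
    ring
  rw [Finset.sum_congr rfl hterm, ← Finset.sum_mul, ← map_sum]
  rw [map_add, PowerSeries.coeff_one, PowerSeries.coeff_C_mul, PowerSeries.coeff_X]
  match m with
  | 0 => simp [cseq]
  | 1 =>
    rw [show (1:ℕ)+1 = 0+1+1 from rfl, Finset.sum_range_succ, Finset.sum_range_succ,
      Finset.sum_range_zero]
    norm_num [cseq, catalan_zero]
    exact Or.inl C4
  | (s+2) =>
    rw [show s+2+1 = s+3 from rfl, conv s]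
    simp

lemma sqrt_unique (A B : PowerSeries Rxy)
    (hA : PowerSeries.constantCoeff A = 1) (hB : PowerSeries.constantCoeff B = 1)
    (h : A ^ 2 = B ^ 2) : A = B := by
  have hz : (A - B) * (A + B) = 0 := by linear_combination h
  rcases mul_eq_zero.mp hz with h0 | h0
  · exact sub_eq_zero.mp h0
  · exfalso
    have := congrArg (PowerSeries.constantCoeff) h0
    rw [map_add, hA, hB, map_zero] at this
    norm_num at this

lemma C2 : (MvPolynomial.C (2:ℚ) : Rxy) = 2 := by
  have h := map_natCast (MvPolynomial.C : ℚ →+* Rxy) 2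
  exact_mod_cast h

lemma Cm2 : (MvPolynomial.C (-2:ℚ) : Rxy) = -2 := by
  rw [map_neg, C2]

lemma key (n : ℕ) :
    ∑ j ∈ range (n+3),
        (MvPolynomial.C (cseq j) * px^(2*j)) * (MvPolynomial.C (cseq (n+2-j)) * py^(2*(n+2-j)))
      = -((2 * ((px^2-py^2)^2)) * (MvPolynomial.C ((-1:ℚ)^n) *
          ∑ k ∈ range (n+1), MvPolynomial.C (Tnk n k) * px^(2*k) * py^(2*n-2*k))) := by
  set Sig0 := ∑ k ∈ range (n+1), MvPolynomial.C (Tnk n k) * px^(2*k) * py^(2*n-2*k) with hSig0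
  set SA := ∑ j ∈ range (n+3),
    MvPolynomial.C (if 2 ≤ j then (if j-2 ≤ n then Tnk n (j-2) else 0) else 0)
      * px^(2*j) * py^(2*(n+2-j)) with hSA
  set SB := ∑ j ∈ range (n+3),
    MvPolynomial.C (if 1 ≤ j then (if j-1 ≤ n then Tnk n (j-1) else 0) else 0)
      * px^(2*j) * py^(2*(n+2-j)) with hSB
  set SD := ∑ j ∈ range (n+3),
    MvPolynomial.C (if j ≤ n then Tnk n j else 0) * px^(2*j) * py^(2*(n+2-j)) with hSD
  have step1 : ∑ j ∈ range (n+3),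
      (MvPolynomial.C (cseq j) * px^(2*j)) * (MvPolynomial.C (cseq (n+2-j)) * py^(2*(n+2-j)))
      = -2 * MvPolynomial.C ((-1:ℚ)^n) * (SA - 2*SB + SD) := by
    have h1 : ∀ j ∈ range (n+3),
        (MvPolynomial.C (cseq j) * px^(2*j)) * (MvPolynomial.C (cseq (n+2-j)) * py^(2*(n+2-j)))
        = -2 * MvPolynomial.C ((-1:ℚ)^n) *
            (MvPolynomial.C (if 2 ≤ j then (if j-2 ≤ n then Tnk n (j-2) else 0) else 0)
                * px^(2*j) * py^(2*(n+2-j))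
              - 2 * (MvPolynomial.C (if 1 ≤ j then (if j-1 ≤ n then Tnk n (j-1) else 0) else 0)
                * px^(2*j) * py^(2*(n+2-j)))
              + MvPolynomial.C (if j ≤ n then Tnk n j else 0) * px^(2*j) * py^(2*(n+2-j))) := by
      intro j hj
      simp only [Finset.mem_range] at hj
      have e : MvPolynomial.C (cseq j) * px^(2*j) * (MvPolynomial.C (cseq (n+2-j)) * py^(2*(n+2-j)))
          = MvPolynomial.C (cseq j * cseq (n+2-j)) * (px^(2*j) * py^(2*(n+2-j))) := by
        rw [map_mul]; ring
      rw [e, keyj n j (by omega)]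
      simp only [map_mul, map_add, map_sub, map_neg, map_ofNat]
      ring
    rw [Finset.sum_congr rfl h1, ← Finset.mul_sum, Finset.sum_add_distrib,
      Finset.sum_sub_distrib, ← Finset.mul_sum, ← hSA, ← hSB, ← hSD]
  have hA : SA = px^4 * Sig0 := by
    rw [hSA, hSig0, Finset.mul_sum]
    conv_lhs => rw [show n+3 = (n+1)+1+1 from rfl, Finset.sum_range_succ', Finset.sum_range_succ']
    rw [if_neg (show ¬(2 ≤ 0) from by omega), if_neg (show ¬(2 ≤ 0+1) from by omega)]
    rw [map_zero, zero_mul, zero_mul, zero_mul, zero_mul, add_zero, add_zero]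
    apply Finset.sum_congr rfl
    intro k hk
    simp only [Finset.mem_range] at hk
    rw [if_pos (show 2 ≤ k+1+1 from by omega), if_pos (show k+1+1-2 ≤ n from by omega),
      show k+1+1-2 = k from by omega, show 2*(k+1+1) = 2*k+4 from by omega,
      show 2*(n+2-(k+1+1)) = 2*n-2*k from by omega, pow_add]
    ring
  have hB : SB = px^2*py^2 * Sig0 := by
    rw [hSB, hSig0, Finset.mul_sum]
    conv_lhs => rw [show n+3 = (n+2)+1 from rfl, Finset.sum_range_succ', Finset.sum_range_succ]
    rw [if_neg (show ¬(1 ≤ 0) from by omega), map_zero, zero_mul, zero_mul, add_zero]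
    rw [if_pos (show 1 ≤ n+1+1 from by omega), if_neg (show ¬(n+1+1-1 ≤ n) from by omega),
      map_zero, zero_mul, zero_mul, add_zero]
    apply Finset.sum_congr rfl
    intro k hk
    simp only [Finset.mem_range] at hk
    rw [if_pos (show 1 ≤ k+1 from by omega), if_pos (show k+1-1 ≤ n from by omega),
      show k+1-1 = k from by omega, show 2*(k+1) = 2*k+2 from by omega,
      show 2*(n+2-(k+1)) = (2*n-2*k)+2 from by omega, pow_add, pow_add]
    ring
  have hD : SD = py^4 * Sig0 := by
    rw [hSD, hSig0, Finset.mul_sum]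
    conv_lhs => rw [show n+3 = (n+1)+1+1 from rfl, Finset.sum_range_succ, Finset.sum_range_succ]
    rw [if_neg (show ¬(n+1+1 ≤ n) from by omega), if_neg (show ¬(n+1 ≤ n) from by omega),
      map_zero, zero_mul, zero_mul, zero_mul, zero_mul, add_zero, add_zero]
    apply Finset.sum_congr rfl
    intro k hk
    simp only [Finset.mem_range] at hk
    rw [if_pos (show k ≤ n from by omega),
      show 2*(n+2-k) = (2*n-2*k)+4 from by omega, pow_add]
    ring
  rw [step1, hA, hB, hD]
  ring

lemma coeff_two_C_mul (q : Rxy) (f : PowerSeries Rxy) (m : ℕ) :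
    PowerSeries.coeff m (2 * PowerSeries.C q * f)
      = 2 * q * PowerSeries.coeff m f := by
  rw [show (2 : PowerSeries Rxy) * PowerSeries.C q = PowerSeries.C (2*q) from by
    rw [map_mul, map_ofNat], PowerSeries.coeff_C_mul]

/-- Expansion of `sqrt((1+4tx²)(1+4ty²))`: if `S₁, S₂ ∈ ℚ[x,y][[t]]` have constant term 1
and `S₁² = 1+4tx²`, `S₂² = 1+4ty²`, then
`S₁S₂ = 1 + 2(x²+y²)t - 2(x²-y²)² ∑_{n≥0} (-1)ⁿ t^{n+2} ∑_{k=0}^n T(n,k) x^{2k} y^{2n-2k}`. -/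
theorem sqrt_product_expansion_a120406
    (S₁ S₂ : PowerSeries Rxy)
    (hS₁c : PowerSeries.constantCoeff S₁ = 1)
    (hS₂c : PowerSeries.constantCoeff S₂ = 1)
    (hS₁ : S₁ ^ 2 = 1 + PowerSeries.C (4 * px ^ 2) * PowerSeries.X)
    (hS₂ : S₂ ^ 2 = 1 + PowerSeries.C (4 * py ^ 2) * PowerSeries.X) :
    S₁ * S₂ = 1 + PowerSeries.C (2 * (px ^ 2 + py ^ 2)) * PowerSeries.X
      - 2 * PowerSeries.C ((px ^ 2 - py ^ 2) ^ 2) *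
          PowerSeries.mk (fun m => if 2 ≤ m then
            MvPolynomial.C ((-1 : ℚ) ^ (m - 2)) *
              ∑ k ∈ Finset.range (m - 1),
                MvPolynomial.C (Tnk (m - 2) k) * px ^ (2 * k) * py ^ (2 * (m - 2) - 2 * k)
          else 0) := by
  have e1 : S₁ = FF px := sqrt_unique S₁ (FF px) hS₁c (FF_const px) (by rw [hS₁, FF_sq])
  have e2 : S₂ = FF py := sqrt_unique S₂ (FF py) hS₂c (FF_const py) (by rw [hS₂, FF_sq])
  rw [e1, e2]
  apply PowerSeries.ext
  intro m
  rw [PowerSeries.coeff_mul, Finset.Nat.sum_antidiagonal_eq_sum_range_succ_mk]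
  simp only [FF, PowerSeries.coeff_mk]
  rw [map_sub, map_add, PowerSeries.coeff_one, PowerSeries.coeff_C_mul, PowerSeries.coeff_X,
    coeff_two_C_mul, PowerSeries.coeff_mk]
  match m with
  | 0 =>
    norm_num [cseq_zero]
  | 1 =>
    rw [Finset.sum_range_succ, Finset.sum_range_one]
    norm_num [cseq_zero, cseq_one, C2]
    ring
  | (n+2) =>
    rw [if_pos (show 2 ≤ n+2 from by omega), if_neg (show ¬(n+2 = 0) from by omega),
      if_neg (show ¬(n+2 = 1) from by omega),
      show n+2-2 = n from by omega, show n+2-1 = n+1 from by omega]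
    rw [show (n+2).succ = n+3 from rfl]
    rw [key n]
    ring


end
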